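/- arXiv:1807.11554 — 6 statements merged into one kernel-verified Lean document; each statement's English description precedes it below -/
import Mathlib

section
/- For every k ∈ ℕ and every z ∈ ℂ, the Bargmann transform of the k-th Hermite function is the monomial z^k/√(k!), i.e. (e^{-z²/2}/π^{1/4}) ∫_ℝ h_k(x) e^{√2·xz − x²/2} dx = z^k/√(k!). -/
open MeasureTheory Real Nat

/-- The physicists' Hermite polynomial `H_k(x) = (−1)^k e^{x²} (d^k/dx^k) e^{−x²}`. -/
noncomputable def physHermite (k : ℕ) (x : ℝ) : ℝ :=
  (-1 : ℝ) ^ k * Real.exp (x ^ 2) * iteratedDeriv k (fun t : ℝ => Real.exp (-t ^ 2)) x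

/-- The `k`-th Hermite function `h_k(x) = (2^k k! √π)^{−1/2} H_k(x) e^{−x²/2}`. -/
noncomputable def hermiteFun (k : ℕ) (x : ℝ) : ℝ :=
  (Real.sqrt (2 ^ k * (k ! : ℝ) * Real.sqrt π))⁻¹ * physHermite k x * Real.exp (-x ^ 2 / 2)

/-!
Write `G(x) = e^{-x²}`, so that `h_k(x) e^{√2 x z - x²/2}` is a constant multiple of `G^{(k)}(x) e^{√2 z x}`.
Every `G^{(k)}` is a polynomial times `G`, so `G^{(k)}(x) e^{c x}` is integrable for all `c ∈ ℂ`,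
and `k` integrations by parts give `∫ G^{(k)}(x) e^{c x} dx = (-c)^k ∫ G(x) e^{c x} dx
= (-c)^k √π e^{c²/4}`. With `c = √2 z` the Gaussian factor `e^{z²/2}` cancels the prefactor
`e^{-z²/2}`, and the normalisation constants reduce to `1/√(k!)`.
-/

open Polynomial
open scoped Complex ContDiff

lemma integrable_pow_mul_exp_neg_sq_add_mul (n : ℕ) (a : ℝ) :
    Integrable fun x : ℝ => x ^ n * rexp (-x ^ 2 + a * x) := by
  have hdom : Integrable fun x : ℝ => rexp (a ^ 2 / 2) * ‖x ^ n * rexp (-(1 / 2) * x ^ 2)‖ := by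
    refine (Integrable.norm ?_).const_mul _
    simpa using integrable_rpow_mul_exp_neg_mul_sq (b := 1 / 2) (by norm_num)
      (s := n) (neg_one_lt_zero.trans_le n.cast_nonneg)
  refine hdom.mono' (by fun_prop) (ae_of_all _ fun x => ?_)
  have hquad : -x ^ 2 + a * x ≤ a ^ 2 / 2 + -(1 / 2) * x ^ 2 := by nlinarith [sq_nonneg (x - a)]
  rw [norm_mul, norm_mul, Real.norm_of_nonneg (exp_pos _).le, Real.norm_of_nonneg (exp_pos _).le,
    mul_left_comm, ← exp_add]
  gcongr

lemma integrable_eval_mul {μ : Measure ℝ} {f : ℝ → ℝ} (p : ℝ[X])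
    (hf : ∀ n : ℕ, Integrable (fun x => x ^ n * f x) μ) :
    Integrable (fun x => p.eval x * f x) μ := by
  simp_rw [eval_eq_sum_range, Finset.sum_mul, mul_assoc]
  exact integrable_finsetSum _ fun i _ => (hf i).const_mul _

lemma exists_iteratedDeriv_exp_neg_sq_eq (k : ℕ) :
    ∃ p : ℝ[X], ∀ x, iteratedDeriv k (fun t => rexp (-t ^ 2)) x = p.eval x * rexp (-x ^ 2) := by
  induction k with
  | zero => exact ⟨1, by simp⟩
  | succ k ih =>
    obtain ⟨p, hp⟩ := ih
    refine ⟨derivative p - C 2 * X * p, fun x => ?_⟩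
    rw [iteratedDeriv_succ, funext hp]
    refine (((p.hasDerivAt x).fun_mul (hasDerivAt_pow 2 x).fun_neg.exp).congr_deriv ?_).deriv
    simp only [cast_ofNat, Nat.add_one_sub_one, pow_one, mul_neg, eval_sub, eval_mul, eval_C,
      eval_X]
    ring

lemma integrable_iteratedDeriv_exp_neg_sq_mul_cexp (k : ℕ) (c : ℂ) :
    Integrable fun x : ℝ =>
      ((iteratedDeriv k (fun t => rexp (-t ^ 2)) x : ℝ) : ℂ) * cexp (c * x) := by
  obtain ⟨p, hp⟩ := exists_iteratedDeriv_exp_neg_sq_eq k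
  have hdom := (integrable_eval_mul p fun n => integrable_pow_mul_exp_neg_sq_add_mul n c.re).norm
  refine hdom.mono' (by fun_prop) (ae_of_all _ fun x => le_of_eq ?_)
  rw [hp, norm_mul, Complex.norm_real, Complex.norm_exp, Complex.re_mul_ofReal, norm_mul, norm_mul,
    Real.norm_of_nonneg (exp_pos _).le, Real.norm_of_nonneg (exp_pos _).le, exp_add, mul_assoc]

lemma integral_deriv_mul_cexp {f f' : ℝ → ℂ} (hf : ∀ x, HasDerivAt f (f' x) x) (c : ℂ)
    (hfc : Integrable fun x : ℝ => f x * cexp (c * x))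
    (hf'c : Integrable fun x : ℝ => f' x * cexp (c * x)) :
    ∫ x : ℝ, f' x * cexp (c * x) = -c * ∫ x : ℝ, f x * cexp (c * x) := by
  have hexp : ∀ x : ℝ, HasDerivAt (fun x : ℝ => cexp (c * x)) (cexp (c * x) * c) x := fun x => by
    simpa using ((hasDerivAt_id x).ofReal_comp.const_mul c).cexp
  have ibp := integral_mul_deriv_eq_deriv_mul_of_integrable (fun x _ => hf x) (fun x _ => hexp x)
    (by simpa only [Pi.mul_def, mul_assoc] using hfc.mul_const c) hf'c hfc
  simp only [← mul_assoc, integral_mul_const] at ibp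
  rw [← neg_eq_iff_eq_neg.mpr ibp]
  ring

lemma integral_iteratedDeriv_mul_cexp {f : ℝ → ℝ} (hf : ContDiff ℝ ∞ f) (c : ℂ)
    (hfc : ∀ k, Integrable fun x : ℝ => ((iteratedDeriv k f x : ℝ) : ℂ) * cexp (c * x)) (k : ℕ) :
    ∫ x : ℝ, ((iteratedDeriv k f x : ℝ) : ℂ) * cexp (c * x) =
      (-c) ^ k * ∫ x : ℝ, (f x : ℂ) * cexp (c * x) := by
  induction k with
  | zero => simp
  | succ k ih =>
    have hdiff := hf.differentiable_iteratedDeriv k (by exact_mod_cast ENat.natCast_lt_top k)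
    have hderiv : ∀ x, HasDerivAt (fun x => ((iteratedDeriv k f x : ℝ) : ℂ))
        ((iteratedDeriv (k + 1) f x : ℝ) : ℂ) x := fun x => by
      rw [iteratedDeriv_succ]
      exact (hdiff x).hasDerivAt.ofReal_comp
    rw [integral_deriv_mul_cexp hderiv c (hfc k) (hfc (k + 1)), ih, pow_succ]
    ring

lemma integral_exp_neg_sq_mul_cexp (c : ℂ) :
    ∫ x : ℝ, (rexp (-x ^ 2) : ℂ) * cexp (c * x) = √π * cexp (c ^ 2 / 4) := by
  have hsqrt : (π : ℂ) ^ (1 / 2 : ℂ) = √π := by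
    rw [Real.sqrt_eq_rpow, Complex.ofReal_cpow pi_pos.le]
    norm_num
  calc _ = ∫ x : ℝ, cexp (-1 * x ^ 2 + c * x + 0) := by
        refine integral_congr_ae (ae_of_all _ fun x => ?_)
        push_cast
        rw [← Complex.exp_add]
        ring_nf
    _ = √π * cexp (c ^ 2 / 4) := by
        rw [integral_cexp_quadratic (by simp) c 0, neg_neg, div_one, hsqrt]
        ring_nf

lemma integral_iteratedDeriv_exp_neg_sq_mul_cexp (k : ℕ) (c : ℂ) :
    ∫ x : ℝ, ((iteratedDeriv k (fun t => rexp (-t ^ 2)) x : ℝ) : ℂ) * cexp (c * x) =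
      (-c) ^ k * √π * cexp (c ^ 2 / 4) := by
  rw [integral_iteratedDeriv_mul_cexp (by fun_prop) c
    (fun k => integrable_iteratedDeriv_exp_neg_sq_mul_cexp k c), integral_exp_neg_sq_mul_cexp,
    mul_assoc]

lemma hermiteFun_mul_cexp (k : ℕ) (x : ℝ) (z : ℂ) :
    (hermiteFun k x : ℂ) * cexp (√2 * x * z - x ^ 2 / 2) =
      (((√(2 ^ k * (k ! : ℝ) * √π))⁻¹ * (-1) ^ k : ℝ) : ℂ) *
        (((iteratedDeriv k (fun t => rexp (-t ^ 2)) x : ℝ) : ℂ) * cexp (√2 * z * x)) := by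
  have hexp : cexp (x ^ 2) * cexp (-x ^ 2 / 2) * cexp (√2 * x * z - x ^ 2 / 2) =
      cexp (√2 * z * x) := by
    rw [← Complex.exp_add, ← Complex.exp_add]
    ring_nf
  simp only [hermiteFun, physHermite]
  push_cast
  linear_combination ((√(2 ^ k * (k ! : ℝ) * √π) : ℝ) : ℂ)⁻¹ * (-1) ^ k *
    ((iteratedDeriv k (fun t => rexp (-t ^ 2)) x : ℝ) : ℂ) * hexp

lemma integral_hermiteFun_mul_cexp (k : ℕ) (z : ℂ) :
    ∫ x : ℝ, (hermiteFun k x : ℂ) * cexp (√2 * x * z - x ^ 2 / 2) =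
      ((√2 ^ k * √π / √(2 ^ k * (k ! : ℝ) * √π) : ℝ) : ℂ) * z ^ k * cexp (z ^ 2 / 2) := by
  have hsq : (√2 * z) ^ 2 / 4 = z ^ 2 / 2 := by
    rw [mul_pow, ← Complex.ofReal_pow, Real.sq_sqrt zero_le_two]
    push_cast
    ring
  have hsign : (-1 : ℂ) ^ k * (-(√2 * z)) ^ k = √2 ^ k * z ^ k := by
    rw [← mul_pow, ← mul_pow]
    ring
  simp_rw [hermiteFun_mul_cexp]
  rw [integral_const_mul, integral_iteratedDeriv_exp_neg_sq_mul_cexp, hsq]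
  push_cast
  linear_combination ((√(2 ^ k * (k ! : ℝ) * √π) : ℝ) : ℂ)⁻¹ * √π * cexp (z ^ 2 / 2) * hsign

lemma sqrt_two_pow_mul_sqrt_pi_div (k : ℕ) :
    √2 ^ k * √π / √(2 ^ k * (k ! : ℝ) * √π) = π ^ (1 / 4 : ℝ) / √(k ! : ℝ) := by
  have hsqrt_sqrt : √√π = π ^ (1 / 4 : ℝ) := by
    rw [Real.sqrt_eq_rpow, Real.sqrt_eq_rpow, ← Real.rpow_mul pi_pos.le]
    norm_num
  have hsqrt_pow : √((2 : ℝ) ^ k) = √2 ^ k := by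
    rw [Real.sqrt_eq_iff_eq_sq (by positivity) (by positivity), ← pow_mul, mul_comm, pow_mul,
      Real.sq_sqrt zero_le_two]
  have hsqrt_pi : √π = π ^ (1 / 4 : ℝ) * π ^ (1 / 4 : ℝ) := by
    rw [← hsqrt_sqrt, Real.mul_self_sqrt (Real.sqrt_nonneg _)]
  rw [Real.sqrt_mul (by positivity), Real.sqrt_mul (by positivity), hsqrt_pow, hsqrt_sqrt, hsqrt_pi]
  have hπ : 0 < π ^ (1 / 4 : ℝ) := Real.rpow_pos_of_pos pi_pos _
  field_simp

/-- The Bargmann transform of the `k`-th Hermite function is the monomial `z^k/√(k!)`. -/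
theorem bargmann_hermiteFun (k : ℕ) (z : ℂ) :
    Complex.exp (-z ^ 2 / 2) / ((π ^ ((1 : ℝ) / 4) : ℝ) : ℂ) *
      ∫ x : ℝ, (hermiteFun k x : ℂ) *
        Complex.exp ((Real.sqrt 2 : ℂ) * (x : ℂ) * z - (x : ℂ) ^ 2 / 2) =
      z ^ k / ((Real.sqrt (k ! : ℝ) : ℝ) : ℂ) := by
  have hexp : cexp (-z ^ 2 / 2) * cexp (z ^ 2 / 2) = 1 := by
    rw [← Complex.exp_add, neg_div, neg_add_cancel, Complex.exp_zero]
  have hπ : ((π ^ (1 / 4 : ℝ) : ℝ) : ℂ) ≠ 0 := by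
    exact_mod_cast (Real.rpow_pos_of_pos pi_pos _).ne'
  rw [integral_hermiteFun_mul_cexp, sqrt_two_pow_mul_sqrt_pi_div]
  calc _ = cexp (-z ^ 2 / 2) * cexp (z ^ 2 / 2) *
        ((π ^ (1 / 4 : ℝ) : ℝ) / (π ^ (1 / 4 : ℝ) : ℝ) : ℂ) * z ^ k / (√(k ! : ℝ) : ℝ) := by
        push_cast
        ring
    _ = _ := by rw [hexp, div_self hπ, one_mul, one_mul]
end

section
/- Let a > 0, k ∈ ℕ. For every t ∈ ℂ, the series Σ_{x∈ℕ} (t^x/x!) C_k^{(a)}(x) converges and equals e^t (1 − t/a)^k. -/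
open Real Nat

/-- The Charlier polynomial of parameter `a > 0`:
`C_k^{(a)}(x) = Σ_{j=0}^{k} binom(k,j)·binom(x,j)·j!·(−1/a)^j` for `x ∈ ℕ`. -/
noncomputable def charlier (a : ℝ) (k x : ℕ) : ℝ :=
  ∑ j ∈ Finset.range (k + 1),
    (k.choose j : ℝ) * (x.choose j : ℝ) * (j ! : ℝ) * (-1 / a) ^ j

/-! Since `binom(x,j)·j!` is the falling factorial `x(x-1)⋯(x-j+1)`, the substitution
`x = m + j` gives `Σ_x t^x/x! · x(x-1)⋯(x-j+1) = t^j e^t`. Summing over `j` with weights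
`binom(k,j)(-1/a)^j` yields `e^t Σ_j binom(k,j)(-t/a)^j = e^t (1 - t/a)^k` by the binomial
theorem. -/

theorem Complex.hasSum_pow_div_factorial_mul_descFactorial (t : ℂ) (j : ℕ) :
    HasSum (fun x : ℕ => t ^ x / x ! * x.descFactorial j) (t ^ j * Complex.exp t) := by
  have hexp : HasSum (fun m : ℕ => t ^ m / m !) (Complex.exp t) := by
    simpa [Complex.exp_eq_exp_ℂ] using NormedSpace.expSeries_div_hasSum_exp t
  have hshift : HasSum (fun m : ℕ => t ^ (m + j) / (m + j)! * (m + j).descFactorial j)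
      (t ^ j * Complex.exp t) := by
    refine (hexp.mul_left (t ^ j)).congr_fun fun m => ?_
    have hfac : ((m + j)! : ℂ) = m ! * (m + j).descFactorial j := by
      exact_mod_cast
        (Nat.add_sub_cancel m j ▸ Nat.factorial_mul_descFactorial (Nat.le_add_left j m)).symm
    have hdesc : ((m + j).descFactorial j : ℂ) ≠ 0 := by
      exact_mod_cast (Nat.descFactorial_eq_zero_iff_lt.not.mpr (by omega))
    rw [hfac, pow_add]
    field_simp
  rw [hasSum_nat_add_iff (f := fun x : ℕ => t ^ x / x ! * x.descFactorial j) j] at hshift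
  have hlow : ∑ x ∈ Finset.range j, t ^ x / x ! * x.descFactorial j = 0 :=
    Finset.sum_eq_zero fun x hx => by
      rw [Nat.descFactorial_eq_zero_iff_lt.mpr (Finset.mem_range.mp hx)]
      simp
  rwa [hlow, add_zero] at hshift

theorem Complex.hasSum_pow_div_factorial_mul_sum_descFactorial (t : ℂ) (s : Finset ℕ)
    (c : ℕ → ℂ) :
    HasSum (fun x : ℕ => t ^ x / x ! * ∑ j ∈ s, c j * x.descFactorial j)
      (Complex.exp t * ∑ j ∈ s, c j * t ^ j) := by
  simp_rw [Finset.mul_sum]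
  refine hasSum_sum fun j _ => ?_
  rw [show Complex.exp t * (c j * t ^ j) = c j * (t ^ j * Complex.exp t) by ring]
  exact ((hasSum_pow_div_factorial_mul_descFactorial t j).mul_left (c j)).congr_fun
    fun x => by ring

theorem charlier_eq_sum_descFactorial (a : ℝ) (k x : ℕ) :
    charlier a k x =
      ∑ j ∈ Finset.range (k + 1), k.choose j * (-1 / a) ^ j * x.descFactorial j := by
  refine Finset.sum_congr rfl fun j _ => ?_
  rw [Nat.descFactorial_eq_factorial_mul_choose]
  push_cast
  ring

theorem charlier_generating_function_general (a : ℝ) (k : ℕ) (t : ℂ) :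
    HasSum (fun x : ℕ => t ^ x / ((x ! : ℕ) : ℂ) * ((charlier a k x : ℝ) : ℂ))
      (Complex.exp t * (1 - t / (a : ℂ)) ^ k) := by
  have hbinom : (1 - t / a) ^ k =
      ∑ j ∈ Finset.range (k + 1), (k.choose j * (-1 / a) ^ j : ℂ) * t ^ j := by
    rw [sub_eq_neg_add, add_pow]
    refine Finset.sum_congr rfl fun j _ => ?_
    ring
  simp_rw [charlier_eq_sum_descFactorial, hbinom]
  push_cast
  exact Complex.hasSum_pow_div_factorial_mul_sum_descFactorial t _ _

/-- For `a > 0`, `k ∈ ℕ` and every `t ∈ ℂ`, the series `Σ_{x∈ℕ} (t^x/x!) C_k^{(a)}(x)`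
converges and equals `e^t (1 − t/a)^k`. -/
theorem charlier_generating_function (a : ℝ) (ha : 0 < a) (k : ℕ) (t : ℂ) :
    HasSum (fun x : ℕ => t ^ x / ((x ! : ℕ) : ℂ) * ((charlier a k x : ℝ) : ℂ))
      (Complex.exp t * (1 - t / (a : ℂ)) ^ k) :=
  charlier_generating_function_general a k t
end

section
/- Let α > −1 be real and k ∈ ℕ. For every s ∈ ℂ with Re(s) > 0, ∫_0^∞ e^{−sx} x^α L_k^{(α)}(x) dx = (Γ(α+k+1)/k!) · (s−1)^k / s^{α+k+1}, where s^{α+k+1} is the principal branch. -/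
/-!
Expanding `x ^ α * L_k^{(α)}(x)` in the powers `x ^ (α + j)` reduces the theorem to the Laplace
transform `∫₀^∞ e^{-st} t^b dt = Γ(b+1) / s^{b+1}` (`b > -1`). Since
`Γ(k+α+1) / (Γ(j+α+1) (k-j)! j!) · Γ(α+j+1) = Γ(α+k+1) / k! · C(k,j)`, the resulting sum collapses
by the binomial theorem to `Γ(α+k+1) / k! · (s-1)^k / s^{α+k+1}`.

For real `s > 0` the Laplace transform is the Gamma integral after the substitution `t ↦ t / s`.
Both sides are holomorphic on `Re s > 0` (differentiate under the integral sign), so the identity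
theorem extends the formula from the positive reals to the whole half-plane.
-/

open MeasureTheory Real Nat Set Filter Topology
open scoped Complex

noncomputable def laguerre (α : ℝ) (k : ℕ) (x : ℝ) : ℝ :=
  ∑ j ∈ Finset.range (k + 1),
    Real.Gamma ((k : ℝ) + α + 1) / Real.Gamma ((j : ℝ) + α + 1) * (-x) ^ j /
      (((k - j)! : ℝ) * (j ! : ℝ))

lemma norm_cexp_neg_mul_mul_rpow (s : ℂ) {t : ℝ} (ht : 0 < t) (b : ℝ) :
    ‖cexp (-s * t) * ((t ^ b : ℝ) : ℂ)‖ = t ^ b * rexp (-s.re * t) := by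
  rw [norm_mul, Complex.norm_exp, Complex.norm_real, norm_of_nonneg (rpow_nonneg ht.le b)]
  simp [mul_comm]

lemma integrableOn_rpow_mul_exp_neg_mul {b c : ℝ} (hb : -1 < b) (hc : 0 < c) :
    IntegrableOn (fun t : ℝ => t ^ b * rexp (-c * t)) (Ioi 0) := by
  simpa using integrableOn_rpow_mul_exp_neg_mul_rpow hb zero_lt_one hc

lemma integrableOn_cexp_neg_mul_mul_rpow {b : ℝ} (hb : -1 < b) {s : ℂ} (hs : 0 < s.re) :
    IntegrableOn (fun t : ℝ => cexp (-s * t) * ((t ^ b : ℝ) : ℂ)) (Ioi 0) := by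
  refine (integrableOn_rpow_mul_exp_neg_mul hb hs).mono' ?_ ?_
  · refine ContinuousOn.aestronglyMeasurable ?_ measurableSet_Ioi
    exact (by fun_prop : Continuous fun t : ℝ => cexp (-s * t)).continuousOn.mul
      (Complex.continuous_ofReal.comp_continuousOn
        (continuousOn_id.rpow_const fun t ht => Or.inl (ne_of_gt ht)))
  · filter_upwards [ae_restrict_mem measurableSet_Ioi] with t ht
    exact (norm_cexp_neg_mul_mul_rpow s ht b).le

lemma differentiableOn_integral_cexp_neg_mul_mul_rpow {b : ℝ} (hb : -1 < b) :
    DifferentiableOn ℂ (fun s : ℂ => ∫ t in Ioi (0 : ℝ), cexp (-s * t) * ((t ^ b : ℝ) : ℂ))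
      {s : ℂ | 0 < s.re} := by
  intro s (hs : 0 < s.re)
  have hε : 0 < s.re / 2 := half_pos hs
  have hre_ball : ∀ z ∈ Metric.ball s (s.re / 2), s.re / 2 ≤ z.re := by
    intro z hz
    have := (Complex.abs_re_le_norm (z - s)).trans (mem_ball_iff_norm.mp hz).le
    rw [Complex.sub_re, abs_le] at this
    linarith [this.1]
  have key := hasDerivAt_integral_of_dominated_loc_of_deriv_le (μ := volume.restrict (Ioi 0))
    (F := fun (z : ℂ) (t : ℝ) => cexp (-z * t) * ((t ^ b : ℝ) : ℂ))
    (F' := fun (z : ℂ) (t : ℝ) => -(t : ℂ) * (cexp (-z * t) * ((t ^ b : ℝ) : ℂ)))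
    (bound := fun t : ℝ => t ^ (b + 1) * rexp (-(s.re / 2) * t)) (Metric.ball_mem_nhds s hε)
    ?_ (integrableOn_cexp_neg_mul_mul_rpow hb hs) ?_ ?_
    (integrableOn_rpow_mul_exp_neg_mul (by linarith) hε) ?_
  · exact key.2.differentiableAt.differentiableWithinAt
  · filter_upwards [Metric.ball_mem_nhds s hε] with z hz
    exact (integrableOn_cexp_neg_mul_mul_rpow hb (hε.trans_le (hre_ball z hz))).aestronglyMeasurable
  · exact (by fun_prop : Continuous fun t : ℝ => -(t : ℂ)).aestronglyMeasurable.mul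
      (integrableOn_cexp_neg_mul_mul_rpow hb hs).aestronglyMeasurable
  · filter_upwards [ae_restrict_mem measurableSet_Ioi] with t (ht : 0 < t) z hz
    calc ‖-(t : ℂ) * (cexp (-z * t) * ((t ^ b : ℝ) : ℂ))‖
        = t ^ (b + 1) * rexp (-z.re * t) := by
          rw [norm_mul, norm_cexp_neg_mul_mul_rpow z ht, norm_neg, Complex.norm_real,
            norm_of_nonneg ht.le, rpow_add_one ht.ne']
          ring
      _ ≤ t ^ (b + 1) * rexp (-(s.re / 2) * t) := by
          gcongr
          linarith [hre_ball z hz]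
  · filter_upwards [ae_restrict_mem measurableSet_Ioi] with t ht z hz
    have := (((hasDerivAt_id z).neg.mul_const (t : ℂ)).cexp).mul_const ((t ^ b : ℝ) : ℂ)
    simpa [mul_comm, mul_left_comm, mul_assoc] using this

lemma integral_cexp_neg_ofReal_mul_mul_rpow {b : ℝ} (hb : -1 < b) {r : ℝ} (hr : 0 < r) :
    ∫ t in Ioi (0 : ℝ), cexp (-(r : ℂ) * t) * ((t ^ b : ℝ) : ℂ)
      = Gamma (b + 1) / (r : ℂ) ^ ((b + 1 : ℝ) : ℂ) := by
  have h := Complex.integral_cpow_mul_exp_neg_mul_Ioi (a := ((b + 1 : ℝ) : ℂ))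
    (by simp; linarith) hr
  have harg : (r : ℂ).arg ≠ π := by
    rw [Complex.arg_ofReal_of_nonneg hr.le]
    exact pi_ne_zero.symm
  rw [one_div, Complex.inv_cpow _ _ harg, Complex.Gamma_ofReal, inv_mul_eq_div] at h
  rw [← h]
  refine setIntegral_congr_fun measurableSet_Ioi fun t (ht : 0 < t) => ?_
  rw [Complex.ofReal_cpow ht.le]
  push_cast
  ring_nf

lemma frequently_ofReal_pos_nhdsNE_one : ∃ᶠ z : ℂ in 𝓝[≠] 1, ∃ r : ℝ, 0 < r ∧ z = r := by
  have hofReal : Tendsto ((↑) : ℝ → ℂ) (𝓝[≠] (1 : ℝ)) (𝓝[≠] (1 : ℂ)) :=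
    tendsto_nhdsWithin_of_tendsto_nhds_of_eventually_within _
      (Complex.continuous_ofReal.tendsto' 1 1 Complex.ofReal_one |>.mono_left nhdsWithin_le_nhds)
      (eventually_nhdsWithin_of_forall fun r (hr : r ≠ 1) => by simpa using hr)
  refine hofReal.frequently (Eventually.frequently ?_)
  filter_upwards [nhdsWithin_le_nhds (Ioi_mem_nhds one_pos)] with r hr
  exact ⟨r, hr, rfl⟩

theorem integral_cexp_neg_mul_mul_rpow {b : ℝ} (hb : -1 < b) {s : ℂ} (hs : 0 < s.re) :
    ∫ t in Ioi (0 : ℝ), cexp (-s * t) * ((t ^ b : ℝ) : ℂ)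
      = Gamma (b + 1) / s ^ ((b + 1 : ℝ) : ℂ) := by
  have hU : IsOpen {s : ℂ | 0 < s.re} := isOpen_lt continuous_const Complex.continuous_re
  have hrhs : DifferentiableOn ℂ (fun s : ℂ => (Gamma (b + 1) : ℂ) / s ^ ((b + 1 : ℝ) : ℂ))
      {s : ℂ | 0 < s.re} := fun z (hz : 0 < z.re) =>
    ((differentiableAt_const _).div
      (differentiableAt_id.cpow (differentiableAt_const _) (Or.inl hz))
      (by simp [Complex.cpow_eq_zero_iff, Complex.ne_zero_of_re_pos hz])).differentiableWithinAt
  refine (differentiableOn_integral_cexp_neg_mul_mul_rpow hb).analyticOnNhd hU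
    |>.eqOn_of_preconnected_of_frequently_eq (hrhs.analyticOnNhd hU)
    (convex_halfSpace_re_gt 0).isPreconnected (by simp : (1 : ℂ) ∈ {s : ℂ | 0 < s.re}) ?_ hs
  refine frequently_ofReal_pos_nhdsNE_one.mono ?_
  rintro _ ⟨r, hr, rfl⟩
  exact integral_cexp_neg_ofReal_mul_mul_rpow hb hr

noncomputable def laguerreCoeff (α : ℝ) (k j : ℕ) : ℝ :=
  Gamma (k + α + 1) / Gamma (j + α + 1) * (-1) ^ j / ((k - j)! * j !)

lemma rpow_mul_laguerre (α : ℝ) (k : ℕ) {x : ℝ} (hx : 0 < x) :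
    x ^ α * laguerre α k x = ∑ j ∈ Finset.range (k + 1), laguerreCoeff α k j * x ^ (α + j) := by
  rw [laguerre, Finset.mul_sum]
  refine Finset.sum_congr rfl fun j _ => ?_
  rw [laguerreCoeff, rpow_add hx, rpow_natCast, neg_pow]
  ring

lemma laguerreCoeff_mul_Gamma {α : ℝ} (hα : -1 < α) {j k : ℕ} (hjk : j ≤ k) :
    laguerreCoeff α k j * Gamma (α + j + 1) = Gamma (α + k + 1) / k ! * (k.choose j * (-1) ^ j) := by
  have hΓ : Gamma (α + j + 1) ≠ 0 := (Gamma_pos_of_pos (by linarith [j.cast_nonneg (α := ℝ)])).ne'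
  have hchoose : (k.choose j : ℝ) ≠ 0 := by exact_mod_cast (Nat.choose_pos hjk).ne'
  rw [laguerreCoeff, add_comm (j : ℝ) α, add_comm (k : ℝ) α, ← Nat.choose_mul_factorial_mul_factorial hjk]
  push_cast
  field_simp

lemma sum_choose_mul_neg_one_pow_div_cpow {s : ℂ} (hs : s ≠ 0) (c : ℂ) (k : ℕ) :
    ∑ j ∈ Finset.range (k + 1), (k.choose j * (-1) ^ j : ℂ) / s ^ (c + j)
      = (s - 1) ^ k / s ^ (c + k) := by
  rw [sub_eq_neg_add, add_pow, Finset.sum_div]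
  refine Finset.sum_congr rfl fun j hj => ?_
  have hjk : j ≤ k := Nat.lt_succ_iff.mp (Finset.mem_range.mp hj)
  have hpow : s ^ (c + k) = s ^ (c + j) * s ^ (k - j) := by
    rw [← Complex.cpow_natCast, ← Complex.cpow_add _ _ hs, Nat.cast_sub hjk]
    ring_nf
  have : s ^ (c + j) ≠ 0 := by simp [Complex.cpow_eq_zero_iff, hs]
  rw [hpow]
  field_simp

/-- For `α > −1`, `k ∈ ℕ` and `s ∈ ℂ` with `Re(s) > 0`,
`∫_0^∞ e^{−sx} x^α L_k^{(α)}(x) dx = (Γ(α+k+1)/k!) · (s−1)^k / s^{α+k+1}`,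
where `s^{α+k+1}` is the principal branch. -/
theorem laplace_laguerre (α : ℝ) (hα : -1 < α) (k : ℕ) (s : ℂ) (hs : 0 < s.re) :
    ∫ x in Set.Ioi (0 : ℝ),
        Complex.exp (-s * (x : ℂ)) * (((x : ℝ) ^ α : ℝ) : ℂ) * ((laguerre α k x : ℝ) : ℂ) =
      ((Real.Gamma (α + (k : ℝ) + 1) / (k ! : ℝ) : ℝ) : ℂ) * (s - 1) ^ k /
        s ^ (((α + (k : ℝ) + 1 : ℝ)) : ℂ) := by
  have hαj (j : ℕ) : -1 < α + j := by linarith [j.cast_nonneg (α := ℝ)]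
  have hcoeff : ∀ j ∈ Finset.range (k + 1),
      ((laguerreCoeff α k j * Gamma (α + j + 1) : ℝ) : ℂ) / s ^ (((α + 1 : ℝ) : ℂ) + j)
        = ((Gamma (α + k + 1) / k ! : ℝ) : ℂ) *
          ((k.choose j * (-1) ^ j : ℂ) / s ^ (((α + 1 : ℝ) : ℂ) + j)) := fun j hj => by
    rw [laguerreCoeff_mul_Gamma hα (le_of_lt_succ (Finset.mem_range.mp hj))]
    push_cast
    ring
  calc _ = ∫ x in Ioi (0 : ℝ), ∑ j ∈ Finset.range (k + 1),
          (laguerreCoeff α k j : ℂ) * (cexp (-s * x) * ((x ^ (α + j) : ℝ) : ℂ)) := by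
        refine setIntegral_congr_fun measurableSet_Ioi fun x (hx : 0 < x) => ?_
        rw [mul_assoc, ← Complex.ofReal_mul, rpow_mul_laguerre α k hx, Complex.ofReal_sum,
          Finset.mul_sum]
        refine Finset.sum_congr rfl fun j _ => ?_
        rw [Complex.ofReal_mul]
        ring
    _ = ∑ j ∈ Finset.range (k + 1),
          ((laguerreCoeff α k j * Gamma (α + j + 1) : ℝ) : ℂ) / s ^ (((α + 1 : ℝ) : ℂ) + j) := by
        rw [integral_finsetSum _ fun j _ =>
          (integrableOn_cexp_neg_mul_mul_rpow (hαj j) hs).const_mul _]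
        refine Finset.sum_congr rfl fun j _ => ?_
        rw [integral_const_mul, integral_cexp_neg_mul_mul_rpow (hαj j) hs]
        push_cast
        ring_nf
    _ = _ := by
        rw [Finset.sum_congr rfl hcoeff, ← Finset.mul_sum,
          sum_choose_mul_neg_one_pow_div_cpow (Complex.ne_zero_of_re_pos hs)]
        push_cast
        ring_nf
end

section
/- Let N ∈ ℕ, 0 < p < 1, q = √((1−p)/p), and k ∈ ℕ with k ≤ N. Define the k-th Krawtchouk function f_k(x) = √( binom(N,x) p^x (1−p)^{N−x} ) · √(binom(N,k)) · q^{−k} · K_k(x; p, N) for 0 ≤ x ≤ N. Then for every z ∈ ℂ, Σ_{x=0}^{N} √(binom(N,x)) f_k(x) z^x = √( binom(N,k) / (1+q²)^N ) · (1 − q z)^k (q + z)^{N−k}. In other words, the spherical transform ℓ_𝕊^{(N)} maps the Krawtchouk functions to the stated polynomials. -/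
open Real Nat

/-- The Pochhammer (rising factorial) symbol `(β)_j = β(β+1)⋯(β+j−1)`, with `(β)_0 = 1`. -/
noncomputable def poch (β : ℝ) (j : ℕ) : ℝ :=
  ∏ i ∈ Finset.range j, (β + (i : ℝ))

/-- The Krawtchouk polynomial
`K_k(x; p, N) = Σ_{j=0}^{k} ((−k)_j (−x)_j / ((−N)_j · j!)) · p^{−j}`. -/
noncomputable def krawtchouk (k x : ℕ) (p : ℝ) (N : ℕ) : ℝ :=
  ∑ j ∈ Finset.range (k + 1),
    poch (-(k : ℝ)) j * poch (-(x : ℝ)) j / (poch (-(N : ℝ)) j * (j ! : ℝ)) * p ^ (-(j : ℤ))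

/-- The `k`-th Krawtchouk function
`f_k(x) = √(binom(N,x) p^x (1−p)^{N−x}) · √(binom(N,k)) · q^{−k} · K_k(x; p, N)`. -/
noncomputable def krawtchoukFun (N : ℕ) (p q : ℝ) (k x : ℕ) : ℝ :=
  Real.sqrt ((N.choose x : ℝ) * p ^ x * (1 - p) ^ (N - x)) *
    Real.sqrt (N.choose k : ℝ) * q ^ (-(k : ℤ)) * krawtchouk k x p N

/-!
Since `(-n)_j = (-1)^j n(n-1)⋯(n-j+1)`, the factor `x(x-1)⋯(x-j+1)` of `K_k(x)` is absorbed by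
the binomial weights: `Σ_x binom(N,x) x(x-1)⋯(x-j+1) b^x a^(N-x) = N(N-1)⋯(N-j+1) b^j (a+b)^(N-j)`.
Hence `Σ_x binom(N,x) K_k(x) b^x a^(N-x) = Σ_j binom(k,j) (-b/p)^j (a+b)^(N-j)`, which is
`(a + b - b/p)^k (a+b)^(N-k)`. The weight `√(binom(N,x) p^x (1-p)^(N-x))` equals
`√binom(N,x) · √p^N · q^(N-x)`, so the transform is this sum at `a = q`, `b = z`; as `1/p = 1 + q²`,
`q + z - z/p = q (1 - q z)`.
-/

theorem poch_neg_natCast (n j : ℕ) : poch (-(n : ℝ)) j = (-1) ^ j * (n.descFactorial j : ℝ) := by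
  simp only [poch, neg_add_eq_sub, ← neg_sub (n : ℝ), Finset.prod_neg, Finset.card_range,
    ← descPochhammer_eval_eq_prod_range, descPochhammer_eval_eq_descFactorial]

theorem krawtchouk_eq_sum (k x : ℕ) (p : ℝ) (N : ℕ) :
    krawtchouk k x p N = ∑ j ∈ Finset.range (k + 1),
      (-1) ^ j * k.choose j * x.descFactorial j / N.descFactorial j * p⁻¹ ^ j := by
  refine Finset.sum_congr rfl fun j _ ↦ ?_
  rw [poch_neg_natCast, poch_neg_natCast, poch_neg_natCast,
    Nat.descFactorial_eq_factorial_mul_choose k, zpow_neg, zpow_natCast, inv_pow]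
  push_cast
  field_simp

theorem Nat.choose_add_mul_descFactorial (j m y : ℕ) :
    (j + m).choose (j + y) * (j + y).descFactorial j = (j + m).descFactorial j * m.choose y := by
  rw [Nat.descFactorial_eq_factorial_mul_choose, Nat.descFactorial_eq_factorial_mul_choose,
    mul_left_comm, Nat.choose_mul (Nat.le_add_right j y), Nat.add_sub_cancel_left,
    Nat.add_sub_cancel_left, mul_assoc]

theorem sum_choose_mul_descFactorial_mul_pow_mul_pow {R : Type*} [CommSemiring R] {N j : ℕ}
    (hj : j ≤ N) (a b : R) :
    ∑ x ∈ Finset.range (N + 1), (N.choose x : R) * x.descFactorial j * b ^ x * a ^ (N - x) =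
      N.descFactorial j * b ^ j * (b + a) ^ (N - j) := by
  obtain ⟨m, rfl⟩ := Nat.exists_eq_add_of_le hj
  have hlow : ∀ x ∈ Finset.range j,
      ((j + m).choose x : R) * x.descFactorial j * b ^ x * a ^ (j + m - x) = 0 := fun x hx ↦ by
    rw [Nat.descFactorial_eq_zero_iff_lt.2 (Finset.mem_range.1 hx)]
    simp
  rw [add_assoc, Finset.sum_range_add, Finset.sum_eq_zero hlow, zero_add, Nat.add_sub_cancel_left,
    add_pow, Finset.mul_sum]
  refine Finset.sum_congr rfl fun y _ ↦ ?_
  rw [← Nat.cast_mul, Nat.choose_add_mul_descFactorial, Nat.add_sub_add_left, pow_add]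
  push_cast
  ring

theorem sum_choose_mul_krawtchouk_mul_pow_mul_pow {N k : ℕ} (hk : k ≤ N) {p : ℝ} (hp : p ≠ 0)
    (a b : ℂ) :
    ∑ x ∈ Finset.range (N + 1), (N.choose x : ℂ) * krawtchouk k x p N * b ^ x * a ^ (N - x) =
      (a + b - b / p) ^ k * (a + b) ^ (N - k) := by
  rw [show a + b - b / p = -(b / p) + (b + a) by ring, add_pow, Finset.sum_mul]
  simp_rw [krawtchouk_eq_sum]
  push_cast
  simp_rw [Finset.mul_sum, Finset.sum_mul]
  rw [Finset.sum_comm]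
  refine Finset.sum_congr rfl fun j hj ↦ ?_
  have hjk : j ≤ k := Nat.lt_succ_iff.1 (Finset.mem_range.1 hj)
  have hNj : (N.descFactorial j : ℂ) ≠ 0 :=
    Nat.cast_ne_zero.2 (Nat.descFactorial_eq_zero_iff_lt.not.2 (by omega))
  have hpC : (p : ℂ) ≠ 0 := Complex.ofReal_ne_zero.2 hp
  calc _ = (-1) ^ j * k.choose j / N.descFactorial j * (p : ℂ)⁻¹ ^ j *
        ∑ x ∈ Finset.range (N + 1), (N.choose x : ℂ) * x.descFactorial j * b ^ x * a ^ (N - x) := by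
        rw [Finset.mul_sum]
        exact Finset.sum_congr rfl fun x _ ↦ by ring
    _ = _ := by
        rw [sum_choose_mul_descFactorial_mul_pow_mul_pow (hjk.trans hk),
          show N - j = (k - j) + (N - k) by omega, pow_add]
        field_simp
        ring

section Weight

variable {N x : ℕ} {p q : ℝ}

theorem sqrt_choose_mul_pow_mul_one_sub_pow (hx : x ≤ N) (hp : 0 ≤ p) (hq : 0 ≤ q)
    (hpq : q ^ 2 * p = 1 - p) :
    √((N.choose x : ℝ) * p ^ x * (1 - p) ^ (N - x)) = √(N.choose x : ℝ) * √p ^ N * q ^ (N - x) := by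
  rw [← Real.sqrt_sq (by positivity : 0 ≤ √(N.choose x : ℝ) * √p ^ N * q ^ (N - x)), mul_pow,
    mul_pow, Real.sq_sqrt (Nat.cast_nonneg _), ← pow_mul, mul_comm N, pow_mul, Real.sq_sqrt hp,
    ← hpq, ← Nat.add_sub_of_le hx]
  congr 1
  rw [Nat.add_sub_cancel_left]
  ring

theorem sqrt_choose_mul_krawtchoukFun (k : ℕ) (hx : x ≤ N) (hp : 0 ≤ p) (hq : 0 ≤ q)
    (hpq : q ^ 2 * p = 1 - p) :
    √(N.choose x : ℝ) * krawtchoukFun N p q k x =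
      √p ^ N * √(N.choose k : ℝ) * q ^ (-(k : ℤ)) *
        (N.choose x * krawtchouk k x p N * q ^ (N - x)) := by
  rw [krawtchoukFun, sqrt_choose_mul_pow_mul_one_sub_pow hx hp hq hpq]
  linear_combination √p ^ N * √(N.choose k : ℝ) * q ^ (-(k : ℤ)) * krawtchouk k x p N *
    q ^ (N - x) * Real.mul_self_sqrt (Nat.cast_nonneg (N.choose x))

end Weight

/-- The spherical transform `ℓ_𝕊^{(N)}` maps the Krawtchouk functions to the stated
polynomials: for `0 < p < 1`, `q = √((1−p)/p)`, `k ≤ N` and every `z ∈ ℂ`,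
`Σ_{x=0}^{N} √(binom(N,x)) f_k(x) z^x = √(binom(N,k)/(1+q²)^N) (1 − qz)^k (q + z)^{N−k}`. -/
theorem sphericalTransform_krawtchoukFun (N : ℕ) (p : ℝ) (hp0 : 0 < p) (hp1 : p < 1)
    (q : ℝ) (hq : q = Real.sqrt ((1 - p) / p)) (k : ℕ) (hk : k ≤ N) (z : ℂ) :
    ∑ x ∈ Finset.range (N + 1),
        ((Real.sqrt (N.choose x : ℝ) : ℝ) : ℂ) * ((krawtchoukFun N p q k x : ℝ) : ℂ) * z ^ x =
      ((Real.sqrt ((N.choose k : ℝ) / (1 + q ^ 2) ^ N) : ℝ) : ℂ) *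
        (1 - (q : ℂ) * z) ^ k * ((q : ℂ) + z) ^ (N - k) := by
  have hq0 : 0 < q := hq ▸ Real.sqrt_pos.2 (div_pos (sub_pos.2 hp1) hp0)
  have hpq : q ^ 2 * p = 1 - p := by
    rw [hq, Real.sq_sqrt (div_pos (sub_pos.2 hp1) hp0).le, div_mul_cancel₀ _ hp0.ne']
  have hterm : ∀ x ∈ Finset.range (N + 1),
      ((√(N.choose x : ℝ) : ℝ) : ℂ) * ((krawtchoukFun N p q k x : ℝ) : ℂ) * z ^ x =
        ((√p ^ N * √(N.choose k : ℝ) * q ^ (-(k : ℤ)) : ℝ) : ℂ) *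
          (N.choose x * krawtchouk k x p N * z ^ x * (q : ℂ) ^ (N - x)) := fun x hx ↦ by
    rw [← Complex.ofReal_mul, sqrt_choose_mul_krawtchoukFun k (Finset.mem_range_succ_iff.1 hx)
      hp0.le hq0.le hpq]
    push_cast
    ring
  have hlin : (q : ℂ) + z - z / p = q * (1 - q * z) := by
    have hpqC : (q : ℂ) ^ 2 * p = 1 - p := by exact_mod_cast hpq
    have hpC : (p : ℂ) ≠ 0 := Complex.ofReal_ne_zero.2 hp0.ne'
    field_simp
    linear_combination z * hpqC
  have hnorm : √((N.choose k : ℝ) / (1 + q ^ 2) ^ N) = √p ^ N * √(N.choose k : ℝ) := by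
    have hinv : 1 + q ^ 2 = p⁻¹ := by
      field_simp
      linarith
    rw [hinv, inv_pow, div_inv_eq_mul,
      ← Real.sqrt_sq (by positivity : 0 ≤ √p ^ N * √(N.choose k : ℝ)), mul_pow, ← pow_mul, mul_comm N, pow_mul, Real.sq_sqrt hp0.le,
      Real.sq_sqrt (Nat.cast_nonneg _), mul_comm]
  rw [Finset.sum_congr rfl hterm, ← Finset.mul_sum,
    sum_choose_mul_krawtchouk_mul_pow_mul_pow hk hp0.ne', hlin, hnorm, mul_pow]
  have hqC : (q : ℂ) ≠ 0 := Complex.ofReal_ne_zero.2 hq0.ne'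
  push_cast
  rw [zpow_neg, zpow_natCast]
  field_simp
end

section
/- Define u : ℝ² → ℝ by u(x,y) = log((x²+y²)(1+x²+y²)) + (x²+y²). Then for every (x,y) ≠ (0,0), the Laplacian of u at (x,y) equals 4·(1 + 1/(1+x²+y²)²), i.e. ∂²u/∂x² + ∂²u/∂y² = 4(1 + (1+x²+y²)^{−2}). (By the Edelman–Kostlan formula, this computes the first intensity ρ₁(z) = (1/π)(1 + (1+|z|²)^{−2}) of the zeros of the derivative of the planar GAF, i.e. of the local extrema of the Bargmann transform of white noise.) -/
/-!
`u` is radial, `u(x,y) = F(x² + y²)` with `F ρ = log (ρ (1 + ρ)) + ρ`, and for a radial function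
`Δ F(x² + y²) = 4 (F'(ρ) + ρ F''(ρ)) = 4 (ρ F')'(ρ)`. Here `ρ F'(ρ) = 1 + ρ / (1 + ρ) + ρ`,
whose derivative is `1 + 1 / (1 + ρ)²`.
-/

open Real Filter Topology

/-- `u(x,y) = log((x²+y²)(1+x²+y²)) + (x²+y²)`. -/
noncomputable def uEK (x y : ℝ) : ℝ :=
  Real.log ((x ^ 2 + y ^ 2) * (1 + x ^ 2 + y ^ 2)) + (x ^ 2 + y ^ 2)

section Radial

variable {F F' : ℝ → ℝ} {F'' : ℝ}

theorem deriv_deriv_comp_sq_add {c x : ℝ}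
    (hF : ∀ᶠ ρ in 𝓝 (x ^ 2 + c), HasDerivAt F (F' ρ) ρ) (hF' : HasDerivAt F' F'' (x ^ 2 + c)) :
    deriv (deriv fun s => F (s ^ 2 + c)) x = 2 * F' (x ^ 2 + c) + 4 * x ^ 2 * F'' := by
  have hsq (s : ℝ) : HasDerivAt (fun s => s ^ 2 + c) (2 * s) s := by
    simpa using (hasDerivAt_pow 2 s).add_const c
  have hderiv : deriv (fun s => F (s ^ 2 + c)) =ᶠ[𝓝 x] fun s => F' (s ^ 2 + c) * (2 * s) := by
    filter_upwards [(hsq x).continuousAt.tendsto.eventually hF] with s hs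
    exact (hs.comp s (hsq s)).deriv
  have hprod : HasDerivAt (fun s => F' (s ^ 2 + c) * (2 * s))
      (F'' * (2 * x) * (2 * x) + F' (x ^ 2 + c) * 2) x :=
    (hF'.comp x (hsq x)).mul (by simpa using (hasDerivAt_id x).const_mul 2)
  rw [hderiv.deriv_eq, hprod.deriv]
  ring

theorem laplacian_comp_sq_add_sq {x y : ℝ}
    (hF : ∀ᶠ ρ in 𝓝 (x ^ 2 + y ^ 2), HasDerivAt F (F' ρ) ρ)
    (hF' : HasDerivAt F' F'' (x ^ 2 + y ^ 2)) :
    deriv (deriv fun s => F (s ^ 2 + y ^ 2)) x + deriv (deriv fun t => F (x ^ 2 + t ^ 2)) y =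
      4 * (F' (x ^ 2 + y ^ 2) + (x ^ 2 + y ^ 2) * F'') := by
  have hswap : (fun t => F (x ^ 2 + t ^ 2)) = fun t => F (t ^ 2 + x ^ 2) :=
    funext fun t => by rw [add_comm]
  rw [hswap, deriv_deriv_comp_sq_add hF hF',
    deriv_deriv_comp_sq_add (by rwa [add_comm]) (by rwa [add_comm]), add_comm (y ^ 2)]
  ring

end Radial

noncomputable def uEKProfile (ρ : ℝ) : ℝ := Real.log (ρ * (1 + ρ)) + ρ

theorem uEK_eq_uEKProfile (x y : ℝ) : uEK x y = uEKProfile (x ^ 2 + y ^ 2) := by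
  simp only [uEK, uEKProfile, add_assoc]

theorem hasDerivAt_uEKProfile {ρ : ℝ} (hρ : 0 < ρ) :
    HasDerivAt uEKProfile (ρ⁻¹ + (1 + ρ)⁻¹ + 1) ρ := by
  have hρ' : 0 < 1 + ρ := by linarith
  have hmul : HasDerivAt (fun ρ => ρ * (1 + ρ)) (1 * (1 + ρ) + ρ * 1) ρ :=
    (hasDerivAt_id' ρ).mul ((hasDerivAt_id' ρ).const_add 1)
  refine ((hmul.log (by positivity)).add (hasDerivAt_id' ρ)).congr_deriv ?_
  field_simp

theorem hasDerivAt_uEKProfile_deriv {ρ : ℝ} (hρ : 0 < ρ) :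
    HasDerivAt (fun ρ => ρ⁻¹ + (1 + ρ)⁻¹ + 1) (-(ρ ^ 2)⁻¹ - ((1 + ρ) ^ 2)⁻¹) ρ := by
  have hρ' : 1 + ρ ≠ 0 := by linarith
  refine (((hasDerivAt_inv hρ.ne').add
    (((hasDerivAt_id' ρ).const_add 1).inv hρ')).add_const 1).congr_deriv ?_
  ring

/-- Away from the origin, the Laplacian of `u(x,y) = log((x²+y²)(1+x²+y²)) + (x²+y²)` equals
`4(1 + (1+x²+y²)^{−2})`. By the Edelman–Kostlan formula this computes the first intensity
`ρ₁(z) = (1/π)(1 + (1+|z|²)^{−2})` of the zeros of the derivative of the planar GAF, i.e. of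
the local extrema of the Bargmann transform of white noise. -/
theorem laplacian_uEK (x y : ℝ) (h : (x, y) ≠ (0, 0)) :
    deriv (deriv (fun s : ℝ => uEK s y)) x + deriv (deriv (fun t : ℝ => uEK x t)) y =
      4 * (1 + 1 / (1 + x ^ 2 + y ^ 2) ^ 2) := by
  have hρ : 0 < x ^ 2 + y ^ 2 := by
    rcases not_and_or.mp (mt Prod.ext_iff.mpr h) with hx | hy <;> positivity
  simp only [uEK_eq_uEKProfile]
  rw [laplacian_comp_sq_add_sq
    (eventually_of_mem (Ioi_mem_nhds hρ) fun _ hρ' => hasDerivAt_uEKProfile hρ')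
    (hasDerivAt_uEKProfile_deriv hρ)]
  field_simp
  ring
end

section
/- For every square-summable sequence f : ℕ → ℂ and every real α > −1, the series Σ_{x∈ℕ} conj(f(x)) √(Γ(x+α+1)/x!) z^x converges absolutely for every z ∈ ℂ with |z| < 1, and the function ℓ_𝔻^{(α)} f : z ↦ Σ_{x∈ℕ} conj(f(x)) √(Γ(x+α+1)/x!) z^x is analytic (complex differentiable) on the open unit disc. -/
open Real Nat

/-- Auxiliary: if the power-series coefficients `c` give absolutely convergent series on the
open unit disc, the sum is differentiable there. -/
lemma aux_differentiableOn_tsum_pow (c : ℕ → ℂ)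
    (h : ∀ z : ℂ, ‖z‖ < 1 → Summable fun n : ℕ => ‖c n * z ^ n‖) :
    DifferentiableOn ℂ (fun z : ℂ => ∑' n : ℕ, c n * z ^ n) (Metric.ball (0 : ℂ) 1) := by
  set p : FormalMultilinearSeries ℂ ℂ ℂ :=
    fun n => ContinuousMultilinearMap.mkPiRing ℂ (Fin n) (c n) with hp
  have hnorm : ∀ n, ‖p n‖ = ‖c n‖ := fun n => by
    simp [hp, ContinuousMultilinearMap.norm_mkPiRing]
  have hrad : 1 ≤ p.radius := by
    refine ENNReal.le_of_forall_nnreal_lt fun r hr => ?_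
    apply p.le_radius_of_summable_norm
    have hz : ‖((r : ℝ) : ℂ)‖ < 1 := by
      rw [Complex.norm_real, Real.norm_eq_abs, abs_of_nonneg r.coe_nonneg]
      exact_mod_cast hr
    have := h ((r : ℝ) : ℂ) hz
    refine this.congr fun n => ?_
    rw [hnorm, norm_mul, norm_pow, Complex.norm_real, Real.norm_eq_abs,
      abs_of_nonneg r.coe_nonneg]
  have hpos : 0 < p.radius := lt_of_lt_of_le one_pos hrad
  have hball := p.hasFPowerSeriesOnBall hpos
  have hsum : (fun z : ℂ => ∑' n : ℕ, c n * z ^ n) = p.sum := by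
    funext z
    simp only [FormalMultilinearSeries.sum, hp, ContinuousMultilinearMap.mkPiRing_apply,
      Finset.prod_const, Finset.card_univ, Fintype.card_fin, smul_eq_mul]
    exact tsum_congr fun n => mul_comm _ _
  rw [hsum]
  refine (hball.differentiableOn).mono fun z hz => ?_
  simp only [EMetric.mem_ball, Metric.mem_ball] at *
  calc edist z 0 < 1 := by
        rw [edist_dist]
        exact ENNReal.ofReal_lt_one.mpr hz
    _ ≤ p.radius := hrad

/-- For every square-summable `f : ℕ → ℂ` and every real `α > −1`, the series
`Σ_{x∈ℕ} conj(f(x)) √(Γ(x+α+1)/x!) z^x` converges absolutely for every `|z| < 1`, and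
`ℓ_𝔻^{(α)} f : z ↦ Σ_{x∈ℕ} conj(f(x)) √(Γ(x+α+1)/x!) z^x` is analytic (complex
differentiable) on the open unit disc. -/
theorem hyperbolicTransform_summable_and_analytic (f : ℕ → ℂ)
    (hf : Summable fun x : ℕ => ‖f x‖ ^ 2) (α : ℝ) (hα : -1 < α) :
    (∀ z : ℂ, ‖z‖ < 1 → Summable fun x : ℕ =>
        ‖(starRingEnd ℂ) (f x) *
          ((Real.sqrt (Real.Gamma ((x : ℝ) + α + 1) / (x ! : ℝ)) : ℝ) : ℂ) * z ^ x‖) ∧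
      DifferentiableOn ℂ (fun z : ℂ =>
          ∑' x : ℕ, (starRingEnd ℂ) (f x) *
            ((Real.sqrt (Real.Gamma ((x : ℝ) + α + 1) / (x ! : ℝ)) : ℝ) : ℂ) * z ^ x)
        (Metric.ball (0 : ℂ) 1) := by
  set c : ℕ → ℂ := fun x =>
    (starRingEnd ℂ) (f x) *
      ((Real.sqrt (Real.Gamma ((x : ℝ) + α + 1) / (x ! : ℝ)) : ℝ) : ℂ) with hc
  -- bound on ‖f x‖
  set B : ℝ := Real.sqrt (∑' x : ℕ, ‖f x‖ ^ 2) with hB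
  have hfB : ∀ x : ℕ, ‖f x‖ ≤ B := by
    intro x
    have h1 : ‖f x‖ ^ 2 ≤ ∑' y : ℕ, ‖f y‖ ^ 2 :=
      Summable.le_tsum hf x fun y _ => sq_nonneg _
    have := Real.sqrt_le_sqrt h1
    rwa [Real.sqrt_sq (norm_nonneg _)] at this
  have hB0 : 0 ≤ B := Real.sqrt_nonneg _
  set m : ℕ := ⌈α + 1⌉₊ with hm
  have hαm : α + 1 ≤ (m : ℝ) := Nat.le_ceil _
  -- the key summability claim
  have key : ∀ z : ℂ, ‖z‖ < 1 → Summable fun x : ℕ => ‖c x * z ^ x‖ := by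
    intro z hz
    have hg : Summable fun n : ℕ => (n : ℝ) ^ m * ‖z‖ ^ n :=
      summable_pow_mul_geometric_of_norm_lt_one m (by rwa [Real.norm_eq_abs, abs_norm])
    refine summable_of_isBigO_nat hg ?_
    rw [Asymptotics.isBigO_iff]
    refine ⟨B * 2 ^ m, ?_⟩
    filter_upwards [Filter.eventually_ge_atTop (max 2 m)] with n hn
    have hn2 : 2 ≤ n := le_trans (le_max_left _ _) hn
    have hnm : m ≤ n := le_trans (le_max_right _ _) hn
    -- compute the norm on the left
    have hsn : (0 : ℝ) ≤ Real.sqrt (Real.Gamma ((n : ℝ) + α + 1) / (n ! : ℝ)) :=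
      Real.sqrt_nonneg _
    have hlhs : ‖c n * z ^ n‖ =
        ‖f n‖ * Real.sqrt (Real.Gamma ((n : ℝ) + α + 1) / (n ! : ℝ)) * ‖z‖ ^ n := by
      rw [hc]
      rw [norm_mul, norm_mul, norm_pow, RCLike.norm_conj, Complex.norm_real,
        Real.norm_eq_abs, abs_of_nonneg hsn]
    -- bound the sqrt factor
    have hGamma : Real.Gamma ((n : ℝ) + α + 1) ≤ ((n + m)! : ℝ) := by
      have hmem1 : ((n : ℝ) + α + 1) ∈ Set.Ici (2 : ℝ) := by
        simp only [Set.mem_Ici]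
        have : (2 : ℝ) ≤ (n : ℝ) := by exact_mod_cast hn2
        linarith
      have hmem2 : (((n + m : ℕ) : ℝ) + 1) ∈ Set.Ici (2 : ℝ) := by
        simp only [Set.mem_Ici]
        have : (2 : ℝ) ≤ ((n : ℝ) + (m : ℝ)) := by
          have h2 : (2 : ℝ) ≤ (n : ℝ) := by exact_mod_cast hn2
          have : (0 : ℝ) ≤ (m : ℝ) := Nat.cast_nonneg _
          linarith
        push_cast
        linarith
      have hle : (n : ℝ) + α + 1 ≤ ((n + m : ℕ) : ℝ) + 1 := by
        push_cast
        linarith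
      have := Real.Gamma_strictMonoOn_Ici.monotoneOn hmem1 hmem2 hle
      rwa [Real.Gamma_nat_eq_factorial] at this
    have hfact : ((n + m)! : ℝ) ≤ ((n ! : ℕ) : ℝ) * ((n : ℝ) + m) ^ m := by
      have hnat : (n + m)! ≤ n ! * (n + m) ^ m := by
        calc (n + m)! = n ! * (n + 1).ascFactorial m :=
              (Nat.factorial_mul_ascFactorial n m).symm
          _ ≤ n ! * (n + m) ^ m :=
              Nat.mul_le_mul_left _ (Nat.ascFactorial_le_pow_add n m)
      have := (Nat.cast_le (α := ℝ)).mpr hnat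
      push_cast at this ⊢
      linarith
    have hpow1 : (1 : ℝ) ≤ ((n : ℝ) + m) ^ m := by
      have h1n : (1 : ℝ) ≤ (n : ℝ) + m := by
        have : (2 : ℝ) ≤ (n : ℝ) := by exact_mod_cast hn2
        have : (0 : ℝ) ≤ (m : ℝ) := Nat.cast_nonneg _
        linarith
      calc (1 : ℝ) = 1 ^ m := (one_pow m).symm
        _ ≤ ((n : ℝ) + m) ^ m := pow_le_pow_left₀ zero_le_one h1n m
    have hdiv : Real.Gamma ((n : ℝ) + α + 1) / (n ! : ℝ) ≤ ((n : ℝ) + m) ^ m := by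
      rw [div_le_iff₀ (by exact_mod_cast Nat.factorial_pos n)]
      calc Real.Gamma ((n : ℝ) + α + 1) ≤ ((n + m)! : ℝ) := hGamma
        _ ≤ ((n ! : ℕ) : ℝ) * ((n : ℝ) + m) ^ m := hfact
        _ = ((n : ℝ) + m) ^ m * (n ! : ℝ) := by ring
    have hsqrt : Real.sqrt (Real.Gamma ((n : ℝ) + α + 1) / (n ! : ℝ)) ≤
        ((n : ℝ) + m) ^ m := by
      have h1 : Real.Gamma ((n : ℝ) + α + 1) / (n ! : ℝ) ≤ (((n : ℝ) + m) ^ m) ^ 2 := by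
        nlinarith [hdiv, hpow1]
      calc Real.sqrt (Real.Gamma ((n : ℝ) + α + 1) / (n ! : ℝ))
          ≤ Real.sqrt ((((n : ℝ) + m) ^ m) ^ 2) := Real.sqrt_le_sqrt h1
        _ = ((n : ℝ) + m) ^ m := Real.sqrt_sq (by positivity)
    have hpow2 : ((n : ℝ) + m) ^ m ≤ 2 ^ m * (n : ℝ) ^ m := by
      rw [← mul_pow]
      apply pow_le_pow_left₀ (by positivity)
      have : (m : ℝ) ≤ (n : ℝ) := by exact_mod_cast hnm
      linarith
    -- put it together
    simp only [Real.norm_eq_abs]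
    rw [abs_of_nonneg (norm_nonneg _), hlhs,
      abs_of_nonneg (by positivity : (0 : ℝ) ≤ (n : ℝ) ^ m * ‖z‖ ^ n)]
    have hz0 : (0 : ℝ) ≤ ‖z‖ ^ n := by positivity
    calc ‖f n‖ * Real.sqrt (Real.Gamma ((n : ℝ) + α + 1) / (n ! : ℝ)) * ‖z‖ ^ n
        ≤ B * (2 ^ m * (n : ℝ) ^ m) * ‖z‖ ^ n := by
          apply mul_le_mul_of_nonneg_right _ hz0
          exact mul_le_mul (hfB n) (le_trans hsqrt hpow2) hsn hB0
      _ = B * 2 ^ m * ((n : ℝ) ^ m * ‖z‖ ^ n) := by ring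
  refine ⟨key, ?_⟩
  have := aux_differentiableOn_tsum_pow c key
  exact this
end
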